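/- For β ∈ (1/2, 1) and ξ ∈ [0, 2], define ρ*(β,ξ) = (√(4−2ξ) − √(6−8β−ξ))²/8 if 1/2 < β ≤ 5/8 − ξ/16, ρ*(β,ξ) = β − 1/2 if 5/8 − ξ/16 < β ≤ 3/4, and ρ*(β,ξ) = (1 − √(1−β))² if 3/4 < β < 1. Then for all β ∈ (1/2, 1) and ξ ∈ [0, 2], ρ*(β,ξ) ≥ ρ(β), where ρ(β) = β − 1/2 for 1/2 < β ≤ 3/4 and ρ(β) = (1 − √(1−β))² for 3/4 < β < 1. -/
import Mathlib


open Real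

/-- The detection boundary of the multi-thresholding covariance test with `n ∼ p^ξ`. -/
noncomputable def rhoStar (β ξ : ℝ) : ℝ :=
  if β ≤ 5/8 - ξ/16 then (Real.sqrt (4 - 2*ξ) - Real.sqrt (6 - 8*β - ξ))^2 / 8
  else if β ≤ 3/4 then β - 1/2
  else (1 - Real.sqrt (1 - β))^2

/-- The classical optimal detection boundary for sparse means, on the sparse regime
`β ∈ (1/2, 1)`. -/
noncomputable def rhoDJ (β : ℝ) : ℝ :=
  if β ≤ 3/4 then β - 1/2 else (1 - Real.sqrt (1 - β))^2

theorem stmt_0 :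
    ∀ β ∈ Set.Ioo (1/2 : ℝ) 1, ∀ ξ ∈ Set.Icc (0 : ℝ) 2,
      rhoDJ β ≤ rhoStar β ξ := by
  rintro β ⟨hβ1, hβ2⟩ ξ ⟨hξ1, hξ2⟩
  unfold rhoStar rhoDJ
  split_ifs with h1 h2 h3
  · -- β ≤ 3/4 and β ≤ 5/8 - ξ/16
    have ha0 : (0:ℝ) ≤ 4 - 2*ξ := by linarith
    have hb0 : (0:ℝ) ≤ 6 - 8*β - ξ := by linarith
    have hc0 : (0:ℝ) ≤ 14 - 3*ξ - 16*β := by linarith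
    have hab : (4 - 2*ξ) * (6 - 8*β - ξ) ≤ ((14 - 3*ξ - 16*β)/2)^2 := by
      nlinarith [sq_nonneg (16*β + ξ - 10)]
    have hkey : Real.sqrt (4 - 2*ξ) * Real.sqrt (6 - 8*β - ξ) ≤ (14 - 3*ξ - 16*β)/2 := by
      rw [← Real.sqrt_mul ha0]
      calc Real.sqrt ((4 - 2*ξ) * (6 - 8*β - ξ))
          ≤ Real.sqrt (((14 - 3*ξ - 16*β)/2)^2) := Real.sqrt_le_sqrt hab
        _ = (14 - 3*ξ - 16*β)/2 := Real.sqrt_sq (by linarith)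
    have hsa := Real.sq_sqrt ha0
    have hsb := Real.sq_sqrt hb0
    nlinarith [hsa, hsb, hkey]
  · linarith
  · exact absurd (by linarith : β ≤ 3/4) h1
  · exact le_refl _
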